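/- arXiv:math/0002189 — 6 statements merged into one kernel-verified Lean document; each statement's English description precedes it below -/
import Mathlib

section
/- Fix α ∈ (−1,1), a real γ ≥ 1, an integer p ≥ 1, and a constant K > 0. Then there exists a constant C > 0 such that for every integer m ≥ 2 the following holds: with mesh points x_j = (j/m)^γ (j = 0, …, m) and widths h_j = x_j − x_{j−1}, for any nonnegative reals e_1, …, e_m satisfying e_1 ≤ K·h_1^{α+1} and e_j ≤ K·h_j^{p+2}·x_{j−1}^{α−p−1} for all 2 ≤ j ≤ m, one has Σ_{j=1}^m e_j ≤ C · m^{−γ(α+1)} · Σ_{j=1}^m j^{γ(α+1)−(p+2)}. All real powers are Real.rpow. -/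
/-!
On the graded mesh `x_j = (j/m)^γ`, convexity of `t ↦ t^γ` gives `h_j ≤ γ x_j / j`, and for
`j ≥ 2` the mesh point `x_{j-1}` is at least `x_j / 2^γ`; as the exponent `α - p - 1` is negative,
`x_{j-1}^{α-p-1} ≤ 2^{γ(p+1-α)} x_j^{α-p-1}`. Hence the `j`-th error is at most
`K γ^{p+2} 2^{γ(p+1-α)} x_j^{α+1} j^{-(p+2)}`, which is the `j`-th summand of the bound since
`x_j^{α+1} = m^{-γ(α+1)} j^{γ(α+1)}`. The first error is at most `K h_1^{α+1} = K m^{-γ(α+1)}`.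
-/

open Real

theorem Real.rpow_sub_rpow_le_mul_rpow_sub_one {a b γ : ℝ} (ha : 0 < a) (hb : 0 ≤ b)
    (hγ : 1 ≤ γ) : a ^ γ - b ^ γ ≤ γ * a ^ (γ - 1) * (a - b) := by
  have hbern : 1 + γ * (b / a - 1) ≤ (b / a) ^ γ := by
    simpa using one_add_mul_self_le_rpow_one_add (s := b / a - 1)
      (by linarith [div_nonneg hb ha.le]) hγ
  rw [div_rpow hb ha.le, le_div_iff₀ (rpow_pos_of_pos ha γ)] at hbern
  have hsplit : a ^ γ = a ^ (γ - 1) * a := by rw [rpow_sub_one ha.ne']; field_simp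
  rw [hsplit] at hbern ⊢
  have hexpand : (1 + γ * (b / a - 1)) * (a ^ (γ - 1) * a) =
      a ^ (γ - 1) * a + γ * a ^ (γ - 1) * (b - a) := by
    field_simp
  linarith

theorem gradedMesh_sub_le {t m γ : ℝ} (hm : 0 < m) (ht : 1 ≤ t) (hγ : 1 ≤ γ) :
    (t / m) ^ γ - ((t - 1) / m) ^ γ ≤ γ / t * (t / m) ^ γ := by
  calc (t / m) ^ γ - ((t - 1) / m) ^ γ
      ≤ γ * (t / m) ^ (γ - 1) * (t / m - (t - 1) / m) :=
        rpow_sub_rpow_le_mul_rpow_sub_one (by positivity) (div_nonneg (by linarith) hm.le) hγ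
    _ = γ / t * (t / m) ^ γ := by
        have ht0 : 0 < t := by linarith
        rw [rpow_sub_one (by positivity)]
        field_simp
        ring

theorem gradedMesh_div_two_rpow_le {t m γ : ℝ} (hm : 0 < m) (ht : 2 ≤ t) (hγ : 0 ≤ γ) :
    (t / m) ^ γ / 2 ^ γ ≤ ((t - 1) / m) ^ γ := by
  rw [← div_rpow (by positivity) zero_le_two]
  apply rpow_le_rpow (by positivity) _ hγ
  rw [div_div, div_le_div_iff₀ (by positivity) hm]
  nlinarith

theorem gradedMesh_width_rpow_mul_rpow_le {t m γ q r : ℝ} (hm : 0 < m) (ht : 2 ≤ t)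
    (hγ : 1 ≤ γ) (hq : 0 ≤ q) (hrq : r ≤ q) :
    ((t / m) ^ γ - ((t - 1) / m) ^ γ) ^ q * (((t - 1) / m) ^ γ) ^ (r - q) ≤
      γ ^ q * 2 ^ (γ * (q - r)) * m ^ (-(γ * r)) * t ^ (γ * r - q) := by
  have ht0 : 0 < t := by linarith
  have hγ0 : 0 ≤ γ := by linarith
  have hprev : 0 ≤ (t - 1) / m := div_nonneg (by linarith) hm.le
  set x := (t / m) ^ γ with hx
  have hx0 : 0 < x := by positivity
  have hwidth : 0 ≤ x - ((t - 1) / m) ^ γ :=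
    sub_nonneg.2 (rpow_le_rpow hprev (by gcongr; linarith) hγ0)
  calc _ ≤ (γ / t * x) ^ q * (x / 2 ^ γ) ^ (r - q) := by
        apply mul_le_mul _ _ (rpow_nonneg (rpow_nonneg hprev _) _) (by positivity)
        · exact rpow_le_rpow hwidth (gradedMesh_sub_le hm (by linarith) hγ) hq
        · exact rpow_le_rpow_of_nonpos (by positivity) (gradedMesh_div_two_rpow_le hm ht hγ0)
            (by linarith)
    _ = γ ^ q * 2 ^ (γ * (q - r)) * t ^ (-q) * x ^ r := by
        have hxr : x ^ r = x ^ q * x ^ (r - q) := by rw [← rpow_add hx0]; ring_nf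
        have h2 : ((2:ℝ) ^ γ) ^ (r - q) = (2 ^ (γ * (q - r)))⁻¹ := by
          rw [← rpow_mul zero_le_two, ← rpow_neg zero_le_two]; ring_nf
        rw [hxr, mul_rpow (by positivity) hx0.le, div_rpow hγ0 ht0.le,
          div_rpow hx0.le (by positivity), h2, rpow_neg ht0.le]
        field_simp
    _ = γ ^ q * 2 ^ (γ * (q - r)) * m ^ (-(γ * r)) * t ^ (γ * r - q) := by
        rw [hx, ← rpow_mul (by positivity), div_rpow ht0.le hm.le, rpow_neg hm.le,
          show γ * r - q = γ * r + -q by ring, rpow_add ht0]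
        field_simp

theorem one_div_rpow_sub_zero_div_rpow_rpow {m γ : ℝ} (r : ℝ) (hm : 0 < m) (hγ : γ ≠ 0) :
    ((1 / m) ^ γ - (0 / m) ^ γ) ^ r = m ^ (-(γ * r)) := by
  rw [zero_div, zero_rpow hγ, sub_zero, ← rpow_mul (by positivity), one_div, inv_rpow hm.le,
    rpow_neg hm.le]

theorem h_method_error_sum_bound_general (α γ : ℝ) (p : ℤ) (K : ℝ)
    (hα₂ : α < 1) (hγ : 1 ≤ γ) (hp : 1 ≤ p) (hK : 0 < K) :
    ∃ C > 0, ∀ m : ℕ, 2 ≤ m →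
      ∀ x h e : ℕ → ℝ,
        (∀ j, j ≤ m → x j = ((j : ℝ) / m) ^ γ) →
        (∀ j, 1 ≤ j → j ≤ m → h j = x j - x (j - 1)) →
        (∀ j, 1 ≤ j → j ≤ m → 0 ≤ e j) →
        e 1 ≤ K * h 1 ^ (α + 1) →
        (∀ j, 2 ≤ j → j ≤ m →
          e j ≤ K * h j ^ ((p : ℝ) + 2) * x (j - 1) ^ (α - p - 1)) →
        ∑ j ∈ Finset.Icc 1 m, e j ≤
          C * (m : ℝ) ^ (-(γ * (α + 1))) *
            ∑ j ∈ Finset.Icc 1 m, (j : ℝ) ^ (γ * (α + 1) - ((p : ℝ) + 2)) := by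
  set q : ℝ := (p : ℝ) + 2 with hq
  have hp' : (1 : ℝ) ≤ p := by exact_mod_cast hp
  have hrq : α + 1 ≤ q := by linarith
  set C := K * (γ ^ q * 2 ^ (γ * (q - (α + 1))))
  have hKC : K ≤ C := le_mul_of_one_le_right hK.le <| one_le_mul_of_one_le_of_one_le
    (one_le_rpow hγ (by linarith)) (one_le_rpow one_le_two (by nlinarith))
  refine ⟨C, hK.trans_le hKC, fun m hm x h e hx hh _ he₁ he => ?_⟩
  have hm0 : (0 : ℝ) < m := by positivity
  have hterm : ∀ j ∈ Finset.Icc 1 m,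
      e j ≤ C * (m : ℝ) ^ (-(γ * (α + 1))) * (j : ℝ) ^ (γ * (α + 1) - q) := by
    intro j hj
    obtain ⟨hj1, hjm⟩ := Finset.mem_Icc.mp hj
    obtain rfl | hj2 := hj1.eq_or_lt
    · calc e 1 ≤ K * h 1 ^ (α + 1) := he₁
        _ = K * (m : ℝ) ^ (-(γ * (α + 1))) := by
          rw [hh 1 le_rfl hjm, hx 1 hjm, hx 0 (by omega), Nat.cast_one, Nat.cast_zero,
            one_div_rpow_sub_zero_div_rpow_rpow _ hm0 (by linarith)]
        _ ≤ _ := by simp only [Nat.cast_one, one_rpow, mul_one]; gcongr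
    · have hj2' : (2 : ℝ) ≤ j := by exact_mod_cast hj2
      calc e j ≤ K * h j ^ q * x (j - 1) ^ (α - p - 1) := he j hj2 hjm
        _ = K * (((j / m : ℝ) ^ γ - ((j - 1) / m : ℝ) ^ γ) ^ q *
              (((j - 1) / m : ℝ) ^ γ) ^ (α + 1 - q)) := by
          rw [hh j hj1 hjm, hx j hjm, hx (j - 1) (by omega), Nat.cast_pred hj1, mul_assoc,
            show α - p - 1 = α + 1 - q by rw [hq]; ring]
        _ ≤ K * (γ ^ q * 2 ^ (γ * (q - (α + 1))) * (m : ℝ) ^ (-(γ * (α + 1))) *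
              (j : ℝ) ^ (γ * (α + 1) - q)) := by
          exact mul_le_mul_of_nonneg_left
            (gradedMesh_width_rpow_mul_rpow_le hm0 hj2' hγ (by linarith) hrq) hK.le
        _ = _ := by ring
  calc ∑ j ∈ Finset.Icc 1 m, e j
      ≤ ∑ j ∈ Finset.Icc 1 m,
          C * (m : ℝ) ^ (-(γ * (α + 1))) * (j : ℝ) ^ (γ * (α + 1) - q) := Finset.sum_le_sum hterm
    _ = _ := by rw [Finset.mul_sum]

/-- Error-sum bound for the `h` method on an algebraically graded mesh: the total error
is bounded by `C · m^{-γ(α+1)} · Σ_{j=1}^m j^{γ(α+1)-(p+2)}`. -/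
theorem h_method_error_sum_bound (α γ : ℝ) (p : ℤ) (K : ℝ)
    (hα₁ : -1 < α) (hα₂ : α < 1) (hγ : 1 ≤ γ) (hp : 1 ≤ p) (hK : 0 < K) :
    ∃ C > 0, ∀ m : ℕ, 2 ≤ m →
      ∀ x h e : ℕ → ℝ,
        (∀ j, j ≤ m → x j = ((j : ℝ) / m) ^ γ) →
        (∀ j, 1 ≤ j → j ≤ m → h j = x j - x (j - 1)) →
        (∀ j, 1 ≤ j → j ≤ m → 0 ≤ e j) →
        e 1 ≤ K * h 1 ^ (α + 1) →
        (∀ j, 2 ≤ j → j ≤ m →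
          e j ≤ K * h j ^ ((p : ℝ) + 2) * x (j - 1) ^ (α - p - 1)) →
        ∑ j ∈ Finset.Icc 1 m, e j ≤
          C * (m : ℝ) ^ (-(γ * (α + 1))) *
            ∑ j ∈ Finset.Icc 1 m, (j : ℝ) ^ (γ * (α + 1) - ((p : ℝ) + 2)) :=
  h_method_error_sum_bound_general α γ p K hα₂ hγ hp hK
end

section
/- Fix α ∈ (−1,1), a real γ ≥ 1, an integer p ≥ 1 with γ(α+1) < p+1, and a constant K > 0. Then there exists a constant C > 0 such that for every integer m ≥ 2 the following holds: with mesh points x_j = (j/m)^γ (j = 0, …, m) and widths h_j = x_j − x_{j−1}, for any nonnegative reals e_1, …, e_m satisfying e_1 ≤ K·h_1^{α+1} and e_j ≤ K·h_j^{p+2}·x_{j−1}^{α−p−1} for all 2 ≤ j ≤ m, one has Σ_{j=1}^m e_j ≤ C · m^{−γ(α+1)}. All real powers are Real.rpow. -/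
/-!
Since `γ ≥ 1`, Bernoulli's inequality bounds the width of the `j`-th interval by
`h_j ≤ γ (j/m)^{γ-1} / m`, and for `j ≥ 2` the left endpoint is comparable to the right
one, `x_{j-1} ≥ (j/(2m))^γ`. Hence the `j`-th error is at most a constant times
`j^s m^{-γ(α+1)}` with `s = γ(α+1) - p - 2`, and sub-criticality `γ(α+1) < p+1` means `s < -1`,
so the sum over `j` is dominated by the convergent series `∑ n^s`. The first interval contributes
exactly `h_1^{α+1} = m^{-γ(α+1)}`.
-/

open Finset

theorem rpow_sub_rpow_le_mul_rpow_mul_sub {γ u v : ℝ} (hγ : 1 ≤ γ) (hv : 0 ≤ v) (hvu : v ≤ u) :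
    u ^ γ - v ^ γ ≤ γ * u ^ (γ - 1) * (u - v) := by
  rcases hvu.lt_or_eq with hvu | rfl
  swap
  · simp
  have hu : 0 < u := hv.trans_lt hvu
  have bernoulli : 1 + γ * (v / u - 1) ≤ (v / u) ^ γ := by
    simpa using one_add_mul_self_le_rpow_one_add (s := v / u - 1)
      (by linarith [div_nonneg hv hu.le]) hγ
  rw [Real.div_rpow hv hu.le, le_div_iff₀ (by positivity)] at bernoulli
  calc u ^ γ - v ^ γ ≤ u ^ γ - (1 + γ * (v / u - 1)) * u ^ γ := by linarith
    _ = γ * u ^ (γ - 1) * (u - v) := by rw [Real.rpow_sub_one hu.ne']; field_simp; ring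

noncomputable def gradedPoint (γ : ℝ) (m j : ℕ) : ℝ := ((j : ℝ) / m) ^ γ

namespace gradedPoint

variable {γ : ℝ} {m j : ℕ}

theorem nonneg : 0 ≤ gradedPoint γ m j := by
  unfold gradedPoint
  positivity

theorem one_sub_zero_rpow (hγ : 0 < γ) (t : ℝ) :
    (gradedPoint γ m 1 - gradedPoint γ m 0) ^ t = (m : ℝ) ^ (-(γ * t)) := by
  simp only [gradedPoint, Nat.cast_one, Nat.cast_zero, zero_div, Real.zero_rpow hγ.ne', sub_zero]
  rw [← Real.rpow_mul (by positivity), one_div, Real.inv_rpow (Nat.cast_nonneg m),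
    Real.rpow_neg (Nat.cast_nonneg m)]

theorem sub_pred_le (hγ : 1 ≤ γ) (hj : 1 ≤ j) :
    gradedPoint γ m j - gradedPoint γ m (j - 1) ≤ γ * ((j : ℝ) / m) ^ (γ - 1) / m := by
  have hcast : ((j - 1 : ℕ) : ℝ) = j - 1 := by push_cast [hj]; ring
  have hstep : (j : ℝ) / m - (j - 1 : ℝ) / m = 1 / m := by ring
  have bound := rpow_sub_rpow_le_mul_rpow_mul_sub hγ (u := (j : ℝ) / m) (v := (j - 1 : ℝ) / m)
    (by rw [← hcast]; positivity) (by gcongr; linarith)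
  rw [hstep] at bound
  rw [gradedPoint, gradedPoint, hcast]
  exact bound.trans_eq (by ring)

theorem monotone (hγ : 0 ≤ γ) : Monotone (gradedPoint γ m) := fun i j hij => by
  unfold gradedPoint
  gcongr

theorem pred_rpow_le {β : ℝ} (hγ : 0 ≤ γ) (hβ : β ≤ 0) (hm : 0 < m) (hj : 2 ≤ j) :
    gradedPoint γ m (j - 1) ^ β ≤ ((j : ℝ) / m / 2) ^ (γ * β) := by
  have hhalf : (j : ℝ) / m / 2 ≤ ((j - 1 : ℕ) : ℝ) / m := by
    rw [div_right_comm, div_le_div_iff_of_pos_right (by positivity), div_le_iff₀ two_pos]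
    have : j ≤ (j - 1) * 2 := by omega
    exact_mod_cast this
  rw [gradedPoint, ← Real.rpow_mul (by positivity)]
  exact Real.rpow_le_rpow_of_nonpos (by positivity) hhalf (mul_nonpos_of_nonneg_of_nonpos hγ hβ)

theorem width_rpow_mul_pred_rpow_le {q β : ℝ} (hγ : 1 ≤ γ) (hq : 0 ≤ q) (hβ : β ≤ 0)
    (hm : 0 < m) (hj : 2 ≤ j) :
    (gradedPoint γ m j - gradedPoint γ m (j - 1)) ^ q * gradedPoint γ m (j - 1) ^ β ≤
      γ ^ q * 2 ^ (-(γ * β)) * (m : ℝ) ^ (-((γ - 1) * q + γ * β + q)) *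
        (j : ℝ) ^ ((γ - 1) * q + γ * β) := by
  have hm' : (0 : ℝ) < m := by exact_mod_cast hm
  have hγ0 : 0 < γ := by linarith
  set u : ℝ := (j : ℝ) / m with hu_def
  have hu : 0 < u := by positivity
  have hj' : (j : ℝ) = u * m := by rw [hu_def, div_mul_cancel₀ _ hm'.ne']
  calc (gradedPoint γ m j - gradedPoint γ m (j - 1)) ^ q * gradedPoint γ m (j - 1) ^ β
      ≤ (γ * u ^ (γ - 1) / m) ^ q * (u / 2) ^ (γ * β) := by
        refine mul_le_mul ?_ (pred_rpow_le hγ0.le hβ hm hj) (Real.rpow_nonneg nonneg _)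
          (by positivity)
        exact Real.rpow_le_rpow (sub_nonneg.2 (monotone hγ0.le (Nat.sub_le j 1)))
          (sub_pred_le hγ (by omega)) hq
    _ = _ := by
        rw [Real.div_rpow (by positivity) hm'.le, Real.mul_rpow hγ0.le (by positivity),
          ← Real.rpow_mul hu.le, Real.div_rpow hu.le two_pos.le, Real.rpow_neg two_pos.le,
          Real.rpow_neg hm'.le, Real.rpow_add hm', hj', Real.mul_rpow hu.le hm'.le,
          Real.rpow_add hu]
        field_simp

end gradedPoint

theorem h_method_subcritical_grading_general (α γ : ℝ) (p : ℤ) (K : ℝ)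
    (hα₂ : α < 1) (hγ : 1 ≤ γ) (hp : 1 ≤ p) (hcrit : γ * (α + 1) < (p : ℝ) + 1) (hK : 0 < K) :
    ∃ C > 0, ∀ m : ℕ, 2 ≤ m →
      ∀ x h e : ℕ → ℝ,
        (∀ j, j ≤ m → x j = ((j : ℝ) / m) ^ γ) →
        (∀ j, 1 ≤ j → j ≤ m → h j = x j - x (j - 1)) →
        (∀ j, 1 ≤ j → j ≤ m → 0 ≤ e j) →
        e 1 ≤ K * h 1 ^ (α + 1) →
        (∀ j, 2 ≤ j → j ≤ m →
          e j ≤ K * h j ^ ((p : ℝ) + 2) * x (j - 1) ^ (α - p - 1)) →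
        ∑ j ∈ Finset.Icc 1 m, e j ≤ C * (m : ℝ) ^ (-(γ * (α + 1))) := by
  have hp' : (1 : ℝ) ≤ p := by exact_mod_cast hp
  set s := (γ - 1) * ((p : ℝ) + 2) + γ * (α - p - 1)
  have hexp : -(s + ((p : ℝ) + 2)) = -(γ * (α + 1)) := by ring
  have hsum : Summable fun n : ℕ => (n : ℝ) ^ s := Real.summable_nat_rpow.mpr (by linarith)
  set B := γ ^ ((p : ℝ) + 2) * 2 ^ (-(γ * (α - p - 1)))
  refine ⟨K + K * B * ∑' n : ℕ, (n : ℝ) ^ s, by positivity, ?_⟩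
  intro m hm x h e hx hh _ he₁ he
  set E := (m : ℝ) ^ (-(γ * (α + 1)))
  have hpoint : ∀ j, j ≤ m → x j = gradedPoint γ m j := hx
  have hwidth : ∀ j, 1 ≤ j → j ≤ m → h j = gradedPoint γ m j - gradedPoint γ m (j - 1) :=
    fun j hj hjm => by rw [hh j hj hjm, hpoint j hjm, hpoint (j - 1) (by omega)]
  have first : e 1 ≤ K * E := by
    rwa [hwidth 1 le_rfl (by omega), gradedPoint.one_sub_zero_rpow (by linarith)] at he₁
  have rest : ∀ j ∈ Ioc 1 m, e j ≤ K * B * E * (j : ℝ) ^ s := by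
    intro j hj
    rw [mem_Ioc] at hj
    have hjm : j ≤ m := hj.2
    have key := gradedPoint.width_rpow_mul_pred_rpow_le (m := m) (j := j) (q := p + 2)
      (β := α - p - 1) hγ (by linarith) (by linarith) (by omega) (by omega)
    rw [hexp, ← hwidth j (by omega) hjm, ← hpoint (j - 1) (by omega)] at key
    calc e j ≤ K * (h j ^ ((p : ℝ) + 2) * x (j - 1) ^ (α - p - 1)) :=
          (he j hj.1 hjm).trans_eq (by ring)
      _ ≤ K * (B * E * (j : ℝ) ^ s) := mul_le_mul_of_nonneg_left key hK.le
      _ = K * B * E * (j : ℝ) ^ s := by ring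
  rw [← add_sum_Ioc_eq_sum_Icc (by omega)]
  calc e 1 + ∑ j ∈ Ioc 1 m, e j ≤ K * E + K * B * E * ∑ j ∈ Ioc 1 m, (j : ℝ) ^ s := by
        rw [mul_sum]; exact add_le_add first (sum_le_sum rest)
    _ ≤ K * E + K * B * E * ∑' n : ℕ, (n : ℝ) ^ s := by
        gcongr
        exact hsum.sum_le_tsum _ fun n _ => by positivity
    _ = (K + K * B * ∑' n : ℕ, (n : ℝ) ^ s) * E := by ring

/-- Convergence of the `h` method with algebraic grading, sub-critical case
`γ(α+1) < p+1`: the total error is bounded by `C · m^{-γ(α+1)}`. -/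
theorem h_method_subcritical_grading (α γ : ℝ) (p : ℤ) (K : ℝ)
    (hα₁ : -1 < α) (hα₂ : α < 1) (hγ : 1 ≤ γ) (hp : 1 ≤ p) (hcrit : γ * (α + 1) < (p : ℝ) + 1) (hK : 0 < K) :
    ∃ C > 0, ∀ m : ℕ, 2 ≤ m →
      ∀ x h e : ℕ → ℝ,
        (∀ j, j ≤ m → x j = ((j : ℝ) / m) ^ γ) →
        (∀ j, 1 ≤ j → j ≤ m → h j = x j - x (j - 1)) →
        (∀ j, 1 ≤ j → j ≤ m → 0 ≤ e j) →
        e 1 ≤ K * h 1 ^ (α + 1) →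
        (∀ j, 2 ≤ j → j ≤ m →
          e j ≤ K * h j ^ ((p : ℝ) + 2) * x (j - 1) ^ (α - p - 1)) →
        ∑ j ∈ Finset.Icc 1 m, e j ≤ C * (m : ℝ) ^ (-(γ * (α + 1))) :=
  h_method_subcritical_grading_general α γ p K hα₂ hγ hp hcrit hK
end

section
/- Fix α ∈ (−1,1), a real γ ≥ 1, an integer p ≥ 1 with γ(α+1) > p+1, and a constant K > 0. Then there exists a constant C > 0 such that for every integer m ≥ 2 the following holds: with mesh points x_j = (j/m)^γ (j = 0, …, m) and widths h_j = x_j − x_{j−1}, for any nonnegative reals e_1, …, e_m satisfying e_1 ≤ K·h_1^{α+1} and e_j ≤ K·h_j^{p+2}·x_{j−1}^{α−p−1} for all 2 ≤ j ≤ m, one has Σ_{j=1}^m e_j ≤ C · m^{−(p+1)}. All real powers are Real.rpow. -/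
/-!
By convexity of `t ↦ t ^ γ`, the width of the `j`-th interval is at most `γ (j/m)^(γ-1) / m`,
and `x_{j-1} ≥ 2^(-γ) x_j` for `j ≥ 2`. Hence every `e_j`, including `e_1`, is at most
`A (j/m)^s m^(-(p+2))` with `s = γ(α+1) - p - 2`. Super-criticality is exactly `s > -1`, so the
Riemann sum `∑ (j/m)^s` is `O(m)` and the total is `O(m^(-(p+1)))`.
-/

open Finset

lemma rpow_mul_one_add_mul_div_sub_one {q a b : ℝ} (hb : 0 < b) :
    b ^ q * (1 + q * (a / b - 1)) = b ^ q - q * b ^ (q - 1) * (b - a) := by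
  rw [Real.rpow_sub hb, Real.rpow_one]
  field_simp
  ring

lemma rpow_sub_rpow_le_mul_sub_of_one_le {q a b : ℝ} (hq : 1 ≤ q) (ha : 0 ≤ a) (hb : 0 < b) :
    b ^ q - a ^ q ≤ q * b ^ (q - 1) * (b - a) := by
  have bernoulli := one_add_mul_self_le_rpow_one_add
    (by linarith [div_nonneg ha hb.le] : -1 ≤ a / b - 1) hq
  rw [add_sub_cancel, Real.div_rpow ha hb.le, le_div_iff₀ (by positivity), mul_comm,
    rpow_mul_one_add_mul_div_sub_one hb] at bernoulli
  linarith

lemma mul_sub_le_rpow_sub_rpow_of_le_one {q a b : ℝ} (hq₀ : 0 ≤ q) (hq₁ : q ≤ 1) (ha : 0 ≤ a)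
    (hb : 0 < b) :
    q * b ^ (q - 1) * (b - a) ≤ b ^ q - a ^ q := by
  have bernoulli := rpow_one_add_le_one_add_mul_self
    (by linarith [div_nonneg ha hb.le] : -1 ≤ a / b - 1) hq₀ hq₁
  rw [add_sub_cancel, Real.div_rpow ha hb.le, div_le_iff₀ (by positivity), mul_comm,
    rpow_mul_one_add_mul_div_sub_one hb] at bernoulli
  linarith

lemma add_one_rpow_le_max_mul_sub {s t : ℝ} (hs : -1 < s) (ht : 0 ≤ t) :
    (t + 1) ^ s ≤ max 1 (s + 1)⁻¹ * ((t + 1) ^ (s + 1) - t ^ (s + 1)) := by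
  have ht₁ : 0 < t + 1 := by linarith
  have hs₁ : 0 < s + 1 := by linarith
  have hdiff : 0 ≤ (t + 1) ^ (s + 1) - t ^ (s + 1) :=
    sub_nonneg.2 (Real.rpow_le_rpow ht (by linarith) hs₁.le)
  rcases le_or_gt 0 s with hs₀ | hs₀
  · have key : t * t ^ s ≤ t * (t + 1) ^ s :=
      mul_le_mul_of_nonneg_left (Real.rpow_le_rpow ht (by linarith) hs₀) ht
    calc (t + 1) ^ s ≤ 1 * ((t + 1) ^ (s + 1) - t ^ (s + 1)) := by
          rw [one_mul, Real.rpow_add_one ht₁.ne', Real.rpow_add_one' ht hs₁.ne']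
          nlinarith
      _ ≤ _ := mul_le_mul_of_nonneg_right (le_max_left _ _) hdiff
  · have tangent := mul_sub_le_rpow_sub_rpow_of_le_one hs₁.le (by linarith) ht ht₁
    rw [add_sub_cancel_right, add_sub_cancel_left, mul_one] at tangent
    calc (t + 1) ^ s = (s + 1)⁻¹ * ((s + 1) * (t + 1) ^ s) :=
          (inv_mul_cancel_left₀ hs₁.ne' _).symm
      _ ≤ (s + 1)⁻¹ * ((t + 1) ^ (s + 1) - t ^ (s + 1)) := by gcongr
      _ ≤ _ := mul_le_mul_of_nonneg_right (le_max_right _ _) hdiff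

lemma sum_Icc_rpow_le {s : ℝ} (hs : -1 < s) (m : ℕ) :
    ∑ j ∈ Icc 1 m, (j : ℝ) ^ s ≤ max 1 (s + 1)⁻¹ * (m : ℝ) ^ (s + 1) := by
  induction m with
  | zero => simp [Real.zero_rpow (by linarith : s + 1 ≠ 0)]
  | succ m ih =>
    rw [sum_Icc_succ_top (by omega), Nat.cast_succ]
    have := add_one_rpow_le_max_mul_sub hs m.cast_nonneg
    linarith

lemma sum_Icc_div_rpow_le {s : ℝ} (hs : -1 < s) (m : ℕ) :
    ∑ j ∈ Icc 1 m, ((j : ℝ) / m) ^ s ≤ max 1 (s + 1)⁻¹ * m := by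
  rcases m.eq_zero_or_pos with rfl | hm
  · simp
  have hm₀ : (0 : ℝ) < m := Nat.cast_pos.2 hm
  simp_rw [Real.div_rpow (Nat.cast_nonneg _) hm₀.le, ← sum_div]
  rw [div_le_iff₀ (by positivity), mul_assoc, ← Real.rpow_one_add' hm₀.le (by linarith),
    add_comm 1 s]
  exact sum_Icc_rpow_le hs m

lemma graded_width_rpow_le {γ P t m : ℝ} (hγ : 1 ≤ γ) (hP : 0 ≤ P) (ht : 1 ≤ t) (hm : 0 < m) :
    ((t / m) ^ γ - ((t - 1) / m) ^ γ) ^ P ≤ γ ^ P * (t / m) ^ ((γ - 1) * P) * m ^ (-P) := by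
  have hu : 0 < t / m := by positivity
  have hv : 0 ≤ (t - 1) / m := div_nonneg (by linarith) hm.le
  have hwidth₀ : 0 ≤ (t / m) ^ γ - ((t - 1) / m) ^ γ :=
    sub_nonneg.2 (Real.rpow_le_rpow hv (by gcongr; linarith) (by linarith))
  have hwidth := rpow_sub_rpow_le_mul_sub_of_one_le hγ hv hu
  rw [← sub_div, sub_sub_cancel, ← inv_eq_one_div, ← Real.rpow_neg_one] at hwidth
  calc ((t / m) ^ γ - ((t - 1) / m) ^ γ) ^ P ≤ (γ * (t / m) ^ (γ - 1) * m ^ (-1 : ℝ)) ^ P := by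
        gcongr
    _ = γ ^ P * (t / m) ^ ((γ - 1) * P) * m ^ (-P) := by
        rw [Real.mul_rpow (by positivity) (by positivity), Real.mul_rpow (by positivity)
          (by positivity), ← Real.rpow_mul hu.le, ← Real.rpow_mul hm.le, neg_one_mul]

lemma graded_point_rpow_le {γ r t m : ℝ} (hγ : 0 ≤ γ) (hr : r ≤ 0) (ht : 2 ≤ t) (hm : 0 < m) :
    (((t - 1) / m) ^ γ) ^ r ≤ 2 ^ (-(γ * r)) * (t / m) ^ (γ * r) := by
  have hu : 0 < t / m := by positivity
  have hhalf : t / m / 2 ≤ (t - 1) / m := by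
    rw [div_right_comm]
    gcongr
    linarith
  calc (((t - 1) / m) ^ γ) ^ r = ((t - 1) / m) ^ (γ * r) := by
        rw [← Real.rpow_mul (div_nonneg (by linarith) hm.le)]
    _ ≤ (t / m / 2) ^ (γ * r) :=
        Real.rpow_le_rpow_of_nonpos (by positivity) hhalf (mul_nonpos_of_nonneg_of_nonpos hγ hr)
    _ = 2 ^ (-(γ * r)) * (t / m) ^ (γ * r) := by
        rw [Real.div_rpow hu.le zero_le_two, Real.rpow_neg zero_le_two, div_eq_inv_mul]

lemma graded_later_term_le {α γ P K t m : ℝ} (hK : 0 ≤ K) (hγ : 1 ≤ γ) (hP : -2 ≤ P)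
    (hαP : α ≤ P + 1) (ht : 2 ≤ t) (hm : 0 < m) :
    K * ((t / m) ^ γ - ((t - 1) / m) ^ γ) ^ (P + 2) * (((t - 1) / m) ^ γ) ^ (α - P - 1) ≤
      K * γ ^ (P + 2) * 2 ^ (γ * (P + 1 - α)) * (t / m) ^ (γ * (α + 1) - P - 2) *
        m ^ (-(P + 2)) := by
  have hu : 0 < t / m := by positivity
  have hv : 0 ≤ (t - 1) / m := div_nonneg (by linarith) hm.le
  calc K * ((t / m) ^ γ - ((t - 1) / m) ^ γ) ^ (P + 2) * (((t - 1) / m) ^ γ) ^ (α - P - 1)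
      ≤ K * (γ ^ (P + 2) * (t / m) ^ ((γ - 1) * (P + 2)) * m ^ (-(P + 2))) *
          (2 ^ (-(γ * (α - P - 1))) * (t / m) ^ (γ * (α - P - 1))) := by
        have := Real.rpow_nonneg (Real.rpow_nonneg hv γ) (α - P - 1)
        gcongr
        · exact graded_width_rpow_le hγ (by linarith) (by linarith) hm
        · exact graded_point_rpow_le (by linarith) (by linarith) ht hm
    _ = K * γ ^ (P + 2) * 2 ^ (γ * (P + 1 - α)) * (t / m) ^ (γ * (α + 1) - P - 2) *
          m ^ (-(P + 2)) := by
        rw [show γ * (α + 1) - P - 2 = (γ - 1) * (P + 2) + γ * (α - P - 1) by ring,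
          Real.rpow_add hu, show -(γ * (α - P - 1)) = γ * (P + 1 - α) by ring]
        ring

lemma graded_first_term_le {α γ P K m : ℝ} (hK : 0 ≤ K) (hγ : 1 ≤ γ) (hP : -2 ≤ P)
    (hαP : α ≤ P + 1) (hm : 0 < m) :
    K * ((1 / m) ^ γ) ^ (α + 1) ≤
      K * γ ^ (P + 2) * 2 ^ (γ * (P + 1 - α)) * (1 / m) ^ (γ * (α + 1) - P - 2) *
        m ^ (-(P + 2)) := by
  have hpow : ((1 / m) ^ γ) ^ (α + 1) = (1 / m) ^ (γ * (α + 1) - P - 2) * m ^ (-(P + 2)) := by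
    rw [← Real.rpow_mul (by positivity), Real.rpow_neg hm.le, ← Real.inv_rpow hm.le,
      ← one_div, ← Real.rpow_add (by positivity)]
    ring_nf
  rw [hpow]
  calc K * ((1 / m) ^ (γ * (α + 1) - P - 2) * m ^ (-(P + 2)))
      = K * 1 * (1 / m) ^ (γ * (α + 1) - P - 2) * m ^ (-(P + 2)) := by ring
    _ ≤ _ := by
        gcongr
        · exact le_mul_of_one_le_right hK (Real.one_le_rpow hγ (by linarith))
        · exact Real.one_le_rpow one_le_two (by nlinarith)

theorem h_method_supercritical_grading_general (α γ : ℝ) (p : ℤ) (K : ℝ)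
    (hα₂ : α < 1) (hγ : 1 ≤ γ) (hp : 1 ≤ p) (hcrit : (p : ℝ) + 1 < γ * (α + 1)) (hK : 0 < K) :
    ∃ C > 0, ∀ m : ℕ, 2 ≤ m →
      ∀ x h e : ℕ → ℝ,
        (∀ j, j ≤ m → x j = ((j : ℝ) / m) ^ γ) →
        (∀ j, 1 ≤ j → j ≤ m → h j = x j - x (j - 1)) →
        (∀ j, 1 ≤ j → j ≤ m → 0 ≤ e j) →
        e 1 ≤ K * h 1 ^ (α + 1) →
        (∀ j, 2 ≤ j → j ≤ m →
          e j ≤ K * h j ^ ((p : ℝ) + 2) * x (j - 1) ^ (α - p - 1)) →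
        ∑ j ∈ Finset.Icc 1 m, e j ≤ C * (m : ℝ) ^ (-((p : ℝ) + 1)) := by
  have hP : (1 : ℝ) ≤ p := by exact_mod_cast hp
  set P : ℝ := (p : ℝ)
  set s := γ * (α + 1) - P - 2
  set A := K * γ ^ (P + 2) * 2 ^ (γ * (P + 1 - α))
  refine ⟨A * max 1 (s + 1)⁻¹, by positivity, fun m hm x h e hx hh _ he₁ hej => ?_⟩
  have hm₀ : (0 : ℝ) < m := Nat.cast_pos.2 (by omega)
  have hterm : ∀ j ∈ Icc 1 m, e j ≤ A * ((j : ℝ) / m) ^ s * (m : ℝ) ^ (-(P + 2)) := by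
    intro j hj
    obtain ⟨hj₁, hjm⟩ := mem_Icc.1 hj
    rcases hj₁.eq_or_lt with rfl | hj₂
    · rw [hh 1 le_rfl hjm, hx 1 hjm, hx 0 (Nat.zero_le m), Nat.cast_zero, zero_div,
        Real.zero_rpow (by linarith), sub_zero] at he₁
      rw [Nat.cast_one] at he₁ ⊢
      refine he₁.trans (graded_first_term_le hK.le hγ ?_ ?_ hm₀) <;> linarith
    · have hej' := hej j hj₂ hjm
      rw [hh j hj₁ hjm, hx j hjm, hx (j - 1) (by omega), Nat.cast_sub hj₁, Nat.cast_one] at hej'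
      refine hej'.trans (graded_later_term_le hK.le hγ ?_ ?_ (by exact_mod_cast hj₂) hm₀) <;>
        linarith
  calc ∑ j ∈ Icc 1 m, e j ≤ ∑ j ∈ Icc 1 m, A * ((j : ℝ) / m) ^ s * (m : ℝ) ^ (-(P + 2)) :=
        sum_le_sum hterm
    _ = A * (m : ℝ) ^ (-(P + 2)) * ∑ j ∈ Icc 1 m, ((j : ℝ) / m) ^ s := by
        rw [mul_sum]
        exact sum_congr rfl fun _ _ => by ring
    _ ≤ A * (m : ℝ) ^ (-(P + 2)) * (max 1 (s + 1)⁻¹ * m) := by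
        gcongr
        exact sum_Icc_div_rpow_le (by linarith) m
    _ = A * max 1 (s + 1)⁻¹ * (m : ℝ) ^ (-(P + 1)) := by
        rw [show -(P + 1) = -(P + 2) + 1 by ring, Real.rpow_add_one hm₀.ne']
        ring

/-- Convergence of the `h` method with algebraic grading, super-critical case
`γ(α+1) > p+1`: the total error is bounded by `C · m^{-(p+1)}`. -/
theorem h_method_supercritical_grading (α γ : ℝ) (p : ℤ) (K : ℝ)
    (hα₁ : -1 < α) (hα₂ : α < 1) (hγ : 1 ≤ γ) (hp : 1 ≤ p) (hcrit : (p : ℝ) + 1 < γ * (α + 1)) (hK : 0 < K) :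
    ∃ C > 0, ∀ m : ℕ, 2 ≤ m →
      ∀ x h e : ℕ → ℝ,
        (∀ j, j ≤ m → x j = ((j : ℝ) / m) ^ γ) →
        (∀ j, 1 ≤ j → j ≤ m → h j = x j - x (j - 1)) →
        (∀ j, 1 ≤ j → j ≤ m → 0 ≤ e j) →
        e 1 ≤ K * h 1 ^ (α + 1) →
        (∀ j, 2 ≤ j → j ≤ m →
          e j ≤ K * h j ^ ((p : ℝ) + 2) * x (j - 1) ^ (α - p - 1)) →
        ∑ j ∈ Finset.Icc 1 m, e j ≤ C * (m : ℝ) ^ (-((p : ℝ) + 1)) :=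
  h_method_supercritical_grading_general α γ p K hα₂ hγ hp hcrit hK
end

section
/- Fix α ∈ (−1,1), a real γ ≥ 1, an integer p ≥ 1 with γ(α+1) = p+1, and a constant K > 0. Then there exists a constant C > 0 such that for every integer m ≥ 2 the following holds: with mesh points x_j = (j/m)^γ (j = 0, …, m) and widths h_j = x_j − x_{j−1}, for any nonnegative reals e_1, …, e_m satisfying e_1 ≤ K·h_1^{α+1} and e_j ≤ K·h_j^{p+2}·x_{j−1}^{α−p−1} for all 2 ≤ j ≤ m, one has Σ_{j=1}^m e_j ≤ C · (log m) · m^{−(p+1)}. All real powers are Real.rpow. -/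
open scoped BigOperators

/-- MVT-type bound via Bernoulli: `b^γ - a^γ ≤ γ b^{γ-1} (b-a)`. -/
lemma rpow_sub_rpow_le_aux (γ : ℝ) (hγ : 1 ≤ γ) {a b : ℝ} (ha : 0 ≤ a) (hab : a ≤ b)
    (hb : 0 < b) : b ^ γ - a ^ γ ≤ γ * b ^ (γ - 1) * (b - a) := by
  have hs : (-1 : ℝ) ≤ a / b - 1 := by
    have : 0 ≤ a / b := div_nonneg ha hb.le
    linarith
  have hber := one_add_mul_self_le_rpow_one_add hs hγ
  rw [show (1 : ℝ) + (a / b - 1) = a / b by ring] at hber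
  rw [Real.div_rpow ha hb.le] at hber
  have hbγ : 0 < b ^ γ := Real.rpow_pos_of_pos hb γ
  have hbg1 : b ^ (γ - 1) = b ^ γ / b := by
    rw [Real.rpow_sub hb, Real.rpow_one]
  rw [hbg1]
  have h2 : (1 + γ * (a / b - 1)) * b ^ γ ≤ a ^ γ := by
    rw [← le_div_iff₀ hbγ]; exact hber
  have hbne : (b : ℝ) ≠ 0 := hb.ne'
  have : (1 + γ * (a / b - 1)) * b ^ γ = b ^ γ + γ * (b ^ γ / b) * (a - b) := by
    field_simp
  rw [this] at h2
  linarith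

/-- Harmonic-type bound: `∑_{j=2}^m 1/j ≤ log m`. -/
lemma harmonic_tail_le_log : ∀ m : ℕ, 2 ≤ m →
    ∑ j ∈ Finset.Icc 2 m, (1 / (j : ℝ)) ≤ Real.log m := by
  intro m hm
  induction m with
  | zero => omega
  | succ n ih =>
    rcases Nat.lt_or_ge n 2 with hn | hn
    · interval_cases n
      · omega
      · simp only [show Finset.Icc 2 2 = {2} from rfl, Finset.sum_singleton]
        have := Real.log_two_gt_d9
        norm_num
        linarith
    · have hstep : Finset.Icc 2 (n + 1) = insert (n + 1) (Finset.Icc 2 n) := by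
        ext k; simp [Finset.mem_Icc, Finset.mem_insert]; omega
      rw [hstep, Finset.sum_insert (by simp)]
      have hlog : Real.log n + 1 / ((n : ℝ) + 1) ≤ Real.log (n + 1) := by
        have hnpos : (0 : ℝ) < n := by positivity
        have hn1 : (0 : ℝ) < (n : ℝ) + 1 := by positivity
        have h1 := Real.log_le_sub_one_of_pos (show (0:ℝ) < (n : ℝ) / ((n:ℝ)+1) by positivity)
        rw [Real.log_div hnpos.ne' hn1.ne'] at h1
        have : (n : ℝ) / ((n:ℝ)+1) - 1 = -(1 / ((n:ℝ)+1)) := by field_simp; ring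
        rw [this] at h1
        linarith
    -- combine
      have := ih hn
      push_cast
      push_cast at hlog
      linarith

/-- Convergence of the `h` method with algebraic grading, critical case
`γ(α+1) = p+1`: the total error is bounded by `C · (log m) · m^{-(p+1)}`. -/
theorem h_method_critical_grading (α γ : ℝ) (p : ℤ) (K : ℝ)
    (hα₁ : -1 < α) (hα₂ : α < 1) (hγ : 1 ≤ γ) (hp : 1 ≤ p) (hcrit : γ * (α + 1) = (p : ℝ) + 1) (hK : 0 < K) :
    ∃ C > 0, ∀ m : ℕ, 2 ≤ m →
      ∀ x h e : ℕ → ℝ,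
        (∀ j, j ≤ m → x j = ((j : ℝ) / m) ^ γ) →
        (∀ j, 1 ≤ j → j ≤ m → h j = x j - x (j - 1)) →
        (∀ j, 1 ≤ j → j ≤ m → 0 ≤ e j) →
        e 1 ≤ K * h 1 ^ (α + 1) →
        (∀ j, 2 ≤ j → j ≤ m →
          e j ≤ K * h j ^ ((p : ℝ) + 2) * x (j - 1) ^ (α - p - 1)) →
        ∑ j ∈ Finset.Icc 1 m, e j ≤ C * Real.log m * (m : ℝ) ^ (-((p : ℝ) + 1)) := by
  have hγ0 : (0 : ℝ) < γ := lt_of_lt_of_le one_pos hγ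
  have hlog2 : (0 : ℝ) < Real.log 2 := Real.log_pos one_lt_two
  set C1 : ℝ := K * γ ^ ((p : ℝ) + 2) * (2 : ℝ) ^ (γ * ((p : ℝ) + 1 - α)) with hC1
  have hC1pos : 0 < C1 := by
    apply mul_pos (mul_pos hK (Real.rpow_pos_of_pos hγ0 _)) (Real.rpow_pos_of_pos two_pos _)
  refine ⟨C1 + K / Real.log 2, by positivity, ?_⟩
  intro m hm x h e hx hh he he1 hej
  have hM : (0 : ℝ) < (m : ℝ) := by positivity
  have hM2 : (2 : ℝ) ≤ (m : ℝ) := by exact_mod_cast hm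
  have hlogm : Real.log 2 ≤ Real.log m := Real.log_le_log two_pos hM2
  have hMp : (0 : ℝ) < (m : ℝ) ^ (-((p : ℝ) + 1)) := Real.rpow_pos_of_pos hM _
  -- split the sum
  have hsplit : Finset.Icc 1 m = insert 1 (Finset.Icc 2 m) := by
    ext k; simp [Finset.mem_Icc, Finset.mem_insert]; omega
  rw [hsplit, Finset.sum_insert (by simp)]
  -- bound on e 1
  have hx0 : x 0 = 0 := by
    rw [hx 0 (by omega)]
    simp [Real.zero_rpow hγ0.ne']
  have hh1 : h 1 = (1 / (m : ℝ)) ^ γ := by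
    rw [hh 1 le_rfl (by omega), hx 1 (by omega)]
    simp [hx0]
  have he1' : e 1 ≤ K * (m : ℝ) ^ (-((p : ℝ) + 1)) := by
    have : h 1 ^ (α + 1) = (m : ℝ) ^ (-((p : ℝ) + 1)) := by
      rw [hh1, ← Real.rpow_mul (by positivity : (0:ℝ) ≤ 1 / (m:ℝ)), hcrit, one_div,
        Real.inv_rpow hM.le, ← Real.rpow_neg hM.le]
    calc e 1 ≤ K * h 1 ^ (α + 1) := he1
      _ = K * (m : ℝ) ^ (-((p : ℝ) + 1)) := by rw [this]
  have hp1 : (1 : ℝ) ≤ (p : ℝ) := by exact_mod_cast hp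
  -- per-term bound on the tail
  have key : ∀ j ∈ Finset.Icc 2 m, e j ≤ C1 * (m : ℝ) ^ (-((p : ℝ) + 1)) * (1 / (j : ℝ)) := by
    intro j hjmem
    rw [Finset.mem_Icc] at hjmem
    obtain ⟨hj2, hjm⟩ := hjmem
    have hJ : (2 : ℝ) ≤ (j : ℝ) := by exact_mod_cast hj2
    have hJ0 : (0 : ℝ) < (j : ℝ) := by linarith
    have hb : (0 : ℝ) < (j : ℝ) / m := by positivity
    have ha : (0 : ℝ) < ((j : ℝ) - 1) / m := by
      apply div_pos (by linarith) hM
    have hcast : ((j - 1 : ℕ) : ℝ) = (j : ℝ) - 1 := by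
      have h1j : 1 ≤ j := by omega
      push_cast [h1j]
      ring
    have hxj1 : x (j - 1) = (((j : ℝ) - 1) / m) ^ γ := by
      rw [hx (j - 1) (by omega), hcast]
    have hab : ((j : ℝ) - 1) / m ≤ (j : ℝ) / m := by gcongr <;> linarith
    have hhj : h j = ((j : ℝ) / m) ^ γ - (((j : ℝ) - 1) / m) ^ γ := by
      rw [hh j (by omega) hjm, hx j hjm, hxj1]
    have hba : (j : ℝ) / m - ((j : ℝ) - 1) / m = 1 / m := by field_simp; ring
    have hh_le : h j ≤ γ * ((j : ℝ) / m) ^ (γ - 1) * (1 / m) := by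
      rw [hhj, ← hba]
      exact rpow_sub_rpow_le_aux γ hγ ha.le hab hb
    have hh_nonneg : 0 ≤ h j := by
      rw [hhj]
      have := Real.rpow_le_rpow ha.le hab hγ0.le
      linarith
    have hstep1 : h j ^ ((p : ℝ) + 2) ≤ (γ * ((j : ℝ) / m) ^ (γ - 1) * (1 / m)) ^ ((p : ℝ) + 2) :=
      Real.rpow_le_rpow hh_nonneg hh_le (by linarith)
    have hb2 : (0 : ℝ) < (j : ℝ) / m / 2 := by positivity
    have hab2 : (j : ℝ) / m / 2 ≤ ((j : ℝ) - 1) / m := by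
      rw [div_div, div_le_div_iff₀ (by positivity) hM]
      nlinarith
    have hexp : α - (p : ℝ) - 1 ≤ 0 := by linarith
    have hstep2 : x (j - 1) ^ (α - (p : ℝ) - 1) ≤
        (((j : ℝ) / m / 2) ^ γ) ^ (α - (p : ℝ) - 1) := by
      rw [hxj1]
      exact Real.rpow_le_rpow_of_nonpos (Real.rpow_pos_of_pos hb2 γ)
        (Real.rpow_le_rpow hb2.le hab2 hγ0.le) hexp
    have hxpos : 0 < x (j - 1) := by rw [hxj1]; exact Real.rpow_pos_of_pos ha γ
    have hbound : e j ≤ K * (γ * ((j : ℝ) / m) ^ (γ - 1) * (1 / m)) ^ ((p : ℝ) + 2) *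
        (((j : ℝ) / m / 2) ^ γ) ^ (α - (p : ℝ) - 1) := by
      calc e j ≤ K * h j ^ ((p : ℝ) + 2) * x (j - 1) ^ (α - (p : ℝ) - 1) := hej j hj2 hjm
        _ ≤ _ := by
            apply mul_le_mul
            · exact mul_le_mul_of_nonneg_left hstep1 hK.le
            · exact hstep2
            · positivity
            · positivity
    refine hbound.trans (le_of_eq ?_)
    -- equality of the two positive products, via logarithms
    have hLpos : (0 : ℝ) < K * (γ * ((j : ℝ) / m) ^ (γ - 1) * (1 / m)) ^ ((p : ℝ) + 2) *
        (((j : ℝ) / m / 2) ^ γ) ^ (α - (p : ℝ) - 1) := by positivity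
    have hRpos : (0 : ℝ) < C1 * (m : ℝ) ^ (-((p : ℝ) + 1)) * (1 / (j : ℝ)) := by positivity
    rw [← Real.exp_log hLpos, ← Real.exp_log hRpos]
    congr 1
    have hγne : γ ≠ 0 := hγ0.ne'
    have hbne : (j : ℝ) / m ≠ 0 := hb.ne'
    have hbpow : (0 : ℝ) < ((j : ℝ) / m) ^ (γ - 1) := Real.rpow_pos_of_pos hb _
    have hin : (0 : ℝ) < γ * ((j : ℝ) / m) ^ (γ - 1) * (1 / m) := by positivity
    have hγpow : (0 : ℝ) < γ ^ ((p : ℝ) + 2) := Real.rpow_pos_of_pos hγ0 _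
    have h2pow : (0 : ℝ) < (2 : ℝ) ^ (γ * ((p : ℝ) + 1 - α)) := Real.rpow_pos_of_pos two_pos _
    have hb2pow : (0 : ℝ) < ((j : ℝ) / m / 2) ^ γ := Real.rpow_pos_of_pos hb2 _
    rw [hC1]
    have hinv : (0 : ℝ) < γ * ((j : ℝ) / m) ^ (γ - 1) * ((m : ℝ))⁻¹ := by positivity
    have f1 : K * (γ * ((j : ℝ) / m) ^ (γ - 1) * ((m : ℝ))⁻¹) ^ ((p : ℝ) + 2) ≠ 0 := by
      positivity
    have f2 : (((j : ℝ) / m / 2) ^ γ) ^ (α - (p : ℝ) - 1) ≠ 0 :=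
      (Real.rpow_pos_of_pos hb2pow _).ne'
    have f3 : K ≠ 0 := hK.ne'
    have f4 : (γ * ((j : ℝ) / m) ^ (γ - 1) * ((m : ℝ))⁻¹) ^ ((p : ℝ) + 2) ≠ 0 :=
      (Real.rpow_pos_of_pos hinv _).ne'
    have f5 : γ * ((j : ℝ) / m) ^ (γ - 1) ≠ 0 := by positivity
    have f6 : ((m : ℝ))⁻¹ ≠ 0 := by positivity
    have f7 : ((j : ℝ) / m) ^ (γ - 1) ≠ 0 := hbpow.ne'
    have f8 : (0 : ℝ) < (j : ℝ) / m := hb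
    have f9 : (0 : ℝ) < (j : ℝ) / m / 2 := hb2
    have f10 : (2 : ℝ) ≠ 0 := two_ne_zero
    have f11 : ((j : ℝ)) ≠ 0 := hJ0.ne'
    have f12 : ((m : ℝ)) ≠ 0 := hM.ne'
    have f13 : K * γ ^ ((p : ℝ) + 2) * (2 : ℝ) ^ (γ * ((p : ℝ) + 1 - α)) *
        (m : ℝ) ^ (-((p : ℝ) + 1)) ≠ 0 := by positivity
    have f14 : K * γ ^ ((p : ℝ) + 2) * (2 : ℝ) ^ (γ * ((p : ℝ) + 1 - α)) ≠ 0 := by positivity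
    have f15 : K * γ ^ ((p : ℝ) + 2) ≠ 0 := by positivity
    have f16 : γ ^ ((p : ℝ) + 2) ≠ 0 := hγpow.ne'
    have f17 : (2 : ℝ) ^ (γ * ((p : ℝ) + 1 - α)) ≠ 0 := h2pow.ne'
    have f18 : (m : ℝ) ^ (-((p : ℝ) + 1)) ≠ 0 := hMp.ne'
    have f19 : (0 : ℝ) < 2 := two_pos
    have f20 : ((j : ℝ))⁻¹ ≠ 0 := by positivity
    simp (disch := assumption) only [one_div, Real.log_mul, Real.log_rpow, Real.log_div,
      Real.log_inv]
    linear_combination (Real.log (j : ℝ) - Real.log (m : ℝ)) * hcrit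
  -- sum the tail
  have htail : ∑ j ∈ Finset.Icc 2 m, e j ≤ C1 * Real.log m * (m : ℝ) ^ (-((p : ℝ) + 1)) := by
    calc ∑ j ∈ Finset.Icc 2 m, e j
        ≤ ∑ j ∈ Finset.Icc 2 m, C1 * (m : ℝ) ^ (-((p : ℝ) + 1)) * (1 / (j : ℝ)) :=
          Finset.sum_le_sum key
      _ = C1 * (m : ℝ) ^ (-((p : ℝ) + 1)) * ∑ j ∈ Finset.Icc 2 m, (1 / (j : ℝ)) := by
          rw [← Finset.mul_sum]
      _ ≤ C1 * (m : ℝ) ^ (-((p : ℝ) + 1)) * Real.log m := by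
          have := harmonic_tail_le_log m hm
          exact mul_le_mul_of_nonneg_left this (by positivity)
      _ = C1 * Real.log m * (m : ℝ) ^ (-((p : ℝ) + 1)) := by ring
  have hhead : e 1 ≤ (K / Real.log 2) * Real.log m * (m : ℝ) ^ (-((p : ℝ) + 1)) := by
    have hKle : K ≤ K / Real.log 2 * Real.log m := by
      rw [div_mul_eq_mul_div, le_div_iff₀ hlog2]
      nlinarith
    calc e 1 ≤ K * (m : ℝ) ^ (-((p : ℝ) + 1)) := he1'
      _ ≤ K / Real.log 2 * Real.log m * (m : ℝ) ^ (-((p : ℝ) + 1)) :=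
          mul_le_mul_of_nonneg_right hKle hMp.le
  calc e 1 + ∑ j ∈ Finset.Icc 2 m, e j
      ≤ K / Real.log 2 * Real.log m * (m : ℝ) ^ (-((p : ℝ) + 1)) +
        C1 * Real.log m * (m : ℝ) ^ (-((p : ℝ) + 1)) := add_le_add hhead htail
    _ = (C1 + K / Real.log 2) * Real.log m * (m : ℝ) ^ (-((p : ℝ) + 1)) := by ring
end

section
/- Define c_j = ((j+1)(j+2)/(2j+1)) · ((j−1)!)⁴ / ((2j)!)³ for integers j ≥ 1, and let μ = e²/2⁶. Then there exists a constant C > 0 such that for every integer j ≥ 1, c_j ≤ C · μ^j / j^{2j+5/2}, where real powers are taken as Real.rpow and e is Euler's number. -/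
/-!
Stirling's bounds `√(2πn) (n/e)ⁿ ≤ n! ≤ e √n (n/e)ⁿ` (the upper one because the Stirling
sequence decreases from its value `e/√2` at `n = 1`) give
`(j!)⁴ / ((2j)!)³ ≤ e⁴/(8π√π) · (e²/2⁶)ʲ · √j / j^(2j)`. Since `(j-1)! = j!/j` and
`(j+1)(j+2)/(2j+1) ≤ 3j`, the bound holds with `C = 3e⁴/(8π√π)`.
-/

open Real Nat

namespace Stirling

theorem stirlingSeq_le_exp_one_div_sqrt_two {n : ℕ} (hn : n ≠ 0) :
    stirlingSeq n ≤ exp 1 / √2 := by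
  obtain ⟨m, rfl⟩ := Nat.exists_eq_succ_of_ne_zero hn
  simpa [stirlingSeq_one] using stirlingSeq'_antitone (Nat.zero_le m)

theorem factorial_le_stirling {n : ℕ} (hn : n ≠ 0) :
    (n ! : ℝ) ≤ exp 1 * √n * (n / exp 1) ^ n := by
  have h := stirlingSeq_le_exp_one_div_sqrt_two hn
  rw [stirlingSeq, div_le_iff₀ (by positivity)] at h
  calc (n ! : ℝ) ≤ exp 1 / √2 * (√(2 * n) * (n / exp 1) ^ n) := h
    _ = exp 1 * √n * (n / exp 1) ^ n := by
      rw [sqrt_mul zero_le_two]; field_simp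

end Stirling

open Stirling in
theorem factorial_pow_four_div_factorial_two_mul_pow_three_le {n : ℕ} (hn : n ≠ 0) :
    (n ! : ℝ) ^ 4 / ((2 * n)! : ℝ) ^ 3 ≤
      exp 1 ^ 4 / (8 * π * √π) * (exp 1 ^ 2 / 2 ^ 6) ^ n * √n / (n : ℝ) ^ (2 * n) := by
  have hn0 : (0 : ℝ) < n := by positivity
  calc (n ! : ℝ) ^ 4 / ((2 * n)! : ℝ) ^ 3
      ≤ (exp 1 * √n * (n / exp 1) ^ n) ^ 4 /
          (√(2 * π * (2 * n : ℕ)) * ((2 * n : ℕ) / exp 1) ^ (2 * n)) ^ 3 := by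
        gcongr
        · exact factorial_le_stirling hn
        · exact le_factorial_stirling _
    _ = exp 1 ^ 4 / (8 * π * √π) * (exp 1 ^ 2 / 2 ^ 6) ^ n * √n / (n : ℝ) ^ (2 * n) := by
      push_cast
      rw [show 2 * π * (2 * n) = 2 ^ 2 * π * n by ring, sqrt_mul (by positivity),
        sqrt_mul (by positivity), sqrt_sq zero_le_two]
      set s := √(n : ℝ)
      set p := √π
      have hs : (n : ℝ) = s ^ 2 := (sq_sqrt hn0.le).symm
      have hp : π = p ^ 2 := (sq_sqrt pi_pos.le).symm
      have hs0 : 0 < s := sqrt_pos.2 hn0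
      have hp0 : 0 < p := sqrt_pos.2 pi_pos
      rw [hs, hp]
      simp only [div_pow, mul_pow, ← pow_mul]
      field_simp
      ring

theorem add_one_mul_add_two_div_two_mul_add_one_le {x : ℝ} (hx : 1 ≤ x) :
    (x + 1) * (x + 2) / (2 * x + 1) ≤ 3 * x := by
  rw [div_le_iff₀ (by linarith)]
  nlinarith

theorem natCast_rpow_two_mul_add_five_div_two (n : ℕ) :
    (n : ℝ) ^ (2 * (n : ℝ) + 5 / 2) = (n : ℝ) ^ (2 * n + 2) * √n := by
  rw [show 2 * (n : ℝ) + 5 / 2 = ((2 * n + 2 : ℕ) : ℝ) + 1 / 2 by push_cast; ring,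
    rpow_add' n.cast_nonneg (by positivity), rpow_natCast, sqrt_eq_rpow]

/-- Super-exponential decay of the Gauss–Lobatto error constants: with
`c_j = ((j+1)(j+2)/(2j+1)) · ((j-1)!)⁴ / ((2j)!)³` and `μ = e²/2⁶`, there is `C > 0`
such that `c_j ≤ C · μ^j / j^(2j+5/2)` for all `j ≥ 1`. -/
theorem gauss_lobatto_constant_bound :
    ∃ C > 0, ∀ j : ℕ, 1 ≤ j →
      ((j : ℝ) + 1) * ((j : ℝ) + 2) / (2 * (j : ℝ) + 1) *
          (Nat.factorial (j - 1) : ℝ) ^ 4 / (Nat.factorial (2 * j) : ℝ) ^ 3 ≤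
        C * (Real.exp 1 ^ 2 / 2 ^ 6) ^ (j : ℝ) / (j : ℝ) ^ (2 * (j : ℝ) + 5 / 2) := by
  refine ⟨3 * exp 1 ^ 4 / (8 * π * √π), by positivity, fun j hj => ?_⟩
  have hj0 : (0 : ℝ) < j := by exact_mod_cast hj
  have hfac : (j ! : ℝ) = j * ((j - 1)! : ℝ) := by
    exact_mod_cast (Nat.mul_factorial_pred (by omega)).symm
  rw [rpow_natCast, natCast_rpow_two_mul_add_five_div_two]
  calc ((j : ℝ) + 1) * ((j : ℝ) + 2) / (2 * (j : ℝ) + 1) * ((j - 1)! : ℝ) ^ 4 /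
        ((2 * j)! : ℝ) ^ 3
      = (j + 1) * (j + 2) / (2 * j + 1) / (j : ℝ) ^ 4 *
          ((j ! : ℝ) ^ 4 / ((2 * j)! : ℝ) ^ 3) := by
        rw [hfac]; field_simp
    _ ≤ 3 * j / (j : ℝ) ^ 4 *
          (exp 1 ^ 4 / (8 * π * √π) * (exp 1 ^ 2 / 2 ^ 6) ^ j * √j / (j : ℝ) ^ (2 * j)) := by
        gcongr ?_ / _ * ?_
        · exact add_one_mul_add_two_div_two_mul_add_one_le (by exact_mod_cast hj)
        · exact factorial_pow_four_div_factorial_two_mul_pow_three_le (by omega)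
    _ = 3 * exp 1 ^ 4 / (8 * π * √π) * (exp 1 ^ 2 / 2 ^ 6) ^ j /
          ((j : ℝ) ^ (2 * j + 2) * √j) := by
        set s := √(j : ℝ)
        have hsqrt : (j : ℝ) = s ^ 2 := (sq_sqrt hj0.le).symm
        have hs0 : 0 < s := sqrt_pos.2 hj0
        rw [hsqrt]
        field_simp
        ring
end

section
/- The circle integral over the unit circle (centre 0, radius 1) of the function z ↦ ((z − 1)/i)^{1/2} / z, where the complex power is the principal branch (Complex.cpow with exponent 1/2), equals 2πi · e^{iπ/4}. -/
open Complex Metric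

lemma aux_contOn : ContinuousOn (fun z : ℂ => ((z - 1) / Complex.I) ^ ((1 : ℂ) / 2))
    (Metric.closedBall (0 : ℂ) 1) := by
  intro z hz
  have hcont : ContinuousAt (fun z : ℂ => (z - 1) / Complex.I) z := by fun_prop
  have h2 : (0:ℝ) < ((1 : ℂ)/2).re := by norm_num
  have hre : ((z - 1) / Complex.I).re = z.im := by
    rw [Complex.div_I]; simp
  have him : ((z - 1) / Complex.I).im = 1 - z.re := by
    rw [Complex.div_I]; simp
  have hcase : 0 ≤ ((z - 1) / Complex.I).re ∨ ((z - 1) / Complex.I).im ≠ 0 := by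
    by_cases h : z.re = 1
    · left
      have hz1 : ‖z‖ ≤ 1 := by simpa using hz
      have h2 : z.re ^ 2 + z.im ^ 2 ≤ 1 := by
        have := Complex.sq_norm z
        nlinarith [Complex.sq_norm z, Complex.normSq_apply z, norm_nonneg z]
      have : z.im = 0 := by nlinarith
      rw [hre, this]
    · right; rw [him]; intro hc; apply h; linarith
  have hc2 : ContinuousAt (fun w : ℂ => w ^ ((1:ℂ)/2)) ((z - 1) / Complex.I) :=
    Complex.continuousAt_cpow_const_of_re_pos hcase h2
  exact (ContinuousAt.comp (f := fun z : ℂ => (z - 1) / Complex.I) (x := z) hc2 hcont).continuousWithinAt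

lemma aux_diff : ∀ x ∈ Metric.ball (0:ℂ) 1 \ (∅ : Set ℂ),
    DifferentiableAt ℂ (fun z : ℂ => ((z - 1) / Complex.I) ^ ((1 : ℂ) / 2)) x := by
  intro x hx
  have hx1 : ‖x‖ < 1 := by simpa using hx.1
  have hre : x.re < 1 := lt_of_le_of_lt (Complex.re_le_norm x) hx1
  have hbase : ((x - 1) / Complex.I) ∈ Complex.slitPlane := by
    right
    rw [Complex.div_I]
    simp only [Complex.mul_im, Complex.sub_re, Complex.sub_im, Complex.neg_im, Complex.neg_re,
      Complex.I_re, Complex.I_im, Complex.one_re, Complex.one_im]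
    intro h
    simp at h
    nlinarith
  exact DifferentiableAt.cpow (by fun_prop) (differentiableAt_const _) hbase

/-- The test contour integral: `∮_{|z|=1} ((z-1)/i)^(1/2) / z dz = 2πi·e^(iπ/4)`,
with the principal branch of the complex square root. -/
theorem circleIntegral_sqrt_div :
    (∮ z in C(0, 1), ((z - 1) / Complex.I) ^ ((1 : ℂ) / 2) / z) =
      2 * Real.pi * Complex.I * Complex.exp (Real.pi / 4 * Complex.I) := by
  have h0 : (0:ℂ) ∈ Metric.ball (0:ℂ) 1 := by simp
  have key := circleIntegral_div_sub_of_differentiable_on_off_countable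
    (Set.countable_empty) h0 aux_contOn aux_diff
  simp only [sub_zero] at key
  rw [key]
  congr 1
  have : ((0:ℂ) - 1) / Complex.I = Complex.I := by
    rw [Complex.div_I]; ring
  rw [this, Complex.cpow_def_of_ne_zero Complex.I_ne_zero, Complex.log_I]
  congr 1
  norm_num
  ring
end
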